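/- arXiv:2106.11569 — 8 statements merged into one kernel-verified Lean document; each statement's English description precedes it below -/
import Mathlib

section
/- Let R be a finite commutative principal ideal ring, decomposed via the structure theorem as R ≅ R_(1) × ⋯ × R_(ρ) where each R_(j) is a finite chain ring, and for j ∈ {1,…,ρ} let Φ_(j) denote the j-th projection map applied coefficient-by-coefficient. Then for any R-submodule N of R^n, rk_R(N) = max_{1 ≤ j ≤ ρ} rk_{R_(j)}(Φ_(j)(N)). -/
open IsLocalRing

/-- The rank of a submodule `N`: the smallest number of elements generating `N`. -/
noncomputable def subrank {R M : Type*} [Semiring R] [AddCommMonoid M] [Module R M]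
    (N : Submodule R M) : ℕ :=
  sInf {k | ∃ f : Fin k → M, Submodule.span R (Set.range f) = N}

/-- The rank of a vector `u ∈ S^n` over `R`: the smallest number of generators of the
`R`-submodule of `S` generated by the coordinates of `u` (i.e. of the support of `u`). -/
noncomputable def vecrank (R : Type*) {S : Type*} {n : ℕ} [Semiring R] [AddCommMonoid S]
    [Module R S] (u : Fin n → S) : ℕ :=
  subrank (Submodule.span R (Set.range u))

/-- The minimum rank distance of a linear code `C ⊆ S^n`, ranks being taken over `K`. -/
noncomputable def minrkdist (K : Type*) {S : Type*} {n : ℕ} [Semiring K] [Ring S]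
    [Module K S] (C : Submodule S (Fin n → S)) : ℕ :=
  sInf {d | ∃ u ∈ C, ∃ v ∈ C, u ≠ v ∧ vecrank K (u - v) = d}

/-!
Write `R = ∏ⱼ Rⱼ` and `eⱼ ∈ R` for the idempotent that is `1` at `j` and `0` elsewhere. A
submodule `N ⊆ R^n` is the direct sum of its pieces `eⱼ N ≅ Φⱼ(N)`, so it is determined by
its projections. Projecting a generating family of `N` generates each `Φⱼ(N)`, which gives `≥`.
Conversely, pad generating families of all the `Φⱼ(N)` with zeros to a common length
`m = maxⱼ rk Φⱼ(N)` and glue them coordinatewise into `m` vectors of `R^n`: their span has the same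
projections as `N`, hence is `N`, which gives `≤`.
-/

section subrank

variable {R M : Type*} [Semiring R] [AddCommMonoid M] [Module R M]

theorem subrank_le_of_span_eq {N : Submodule R M} {k : ℕ} (f : Fin k → M)
    (hf : Submodule.span R (Set.range f) = N) : subrank N ≤ k :=
  Nat.sInf_le ⟨f, hf⟩

theorem exists_span_eq_of_subrank_le {N : Submodule R M} (hN : N.FG) {m : ℕ}
    (hm : subrank N ≤ m) : ∃ g : Fin m → M, Submodule.span R (Set.range g) = N := by
  obtain ⟨f, hf⟩ : subrank N ∈ {k | ∃ f : Fin k → M, Submodule.span R (Set.range f) = N} :=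
    Nat.sInf_mem (Submodule.fg_iff_exists_fin_generating_family.mp hN)
  refine ⟨fun i => if h : (i : ℕ) < subrank N then f ⟨i, h⟩ else 0, le_antisymm ?_ ?_⟩
  · calc _ ≤ Submodule.span R (insert 0 (Set.range f)) := by
          refine Submodule.span_mono (Set.range_subset_iff.mpr fun i => ?_)
          split_ifs
          · exact Set.mem_insert_of_mem _ ⟨_, rfl⟩
          · exact Set.mem_insert _ _
      _ = N := by rw [Submodule.span_insert_zero, hf]
  · calc N = Submodule.span R (Set.range f) := hf.symm
      _ ≤ _ := Submodule.span_mono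
          (Set.range_subset_iff.mpr fun i => Set.mem_range.mpr ⟨Fin.castLE hm i, by simp⟩)

theorem subrank_map_le {S M' : Type*} [Semiring S] [AddCommMonoid M'] [Module S M']
    {σ : R →+* S} [RingHomSurjective σ] (f : M →ₛₗ[σ] M') {N : Submodule R M} (hN : N.FG) :
    subrank (N.map f) ≤ subrank N := by
  obtain ⟨g, hg⟩ := exists_span_eq_of_subrank_le hN le_rfl
  refine subrank_le_of_span_eq (f ∘ g) ?_
  rw [Set.range_comp, ← Submodule.map_span, hg]

end subrank

section coordProj

variable {ι α : Type*} (Rc : ι → Type*) [∀ j, Semiring (Rc j)]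

def coordProj (α : Type*) (j : ι) :
    (α → ∀ j', Rc j') →ₛₗ[Pi.evalRingHom Rc j] (α → Rc j) where
  toFun v a := v a j
  map_add' _ _ := rfl
  map_smul' _ _ := rfl

variable {Rc}

@[simp]
theorem coordProj_apply (j : ι) (v : α → ∀ j', Rc j') (a : α) : coordProj Rc α j v a = v a j :=
  rfl

theorem span_image_coordProj (j : ι) (N : Submodule (∀ j, Rc j) (α → ∀ j, Rc j)) :
    Submodule.span (Rc j) ((fun (v : α → ∀ j, Rc j) (a : α) => v a j) '' N) =
      N.map (coordProj Rc α j) :=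
  Submodule.span_eq (N.map (coordProj Rc α j))

variable [Finite ι]

theorem mem_of_forall_coordProj_mem_map {N : Submodule (∀ j, Rc j) (α → ∀ j, Rc j)}
    {x : α → ∀ j, Rc j} (hx : ∀ j, coordProj Rc α j x ∈ N.map (coordProj Rc α j)) : x ∈ N := by
  classical
  have := Fintype.ofFinite ι
  choose y hyN hyx using hx
  -- `x` is the sum of its pieces `eⱼ • x = eⱼ • y j`.
  have hx : x = ∑ j, (Pi.single j 1 : ∀ j', Rc j') • y j := by
    funext a j'
    have hj' : y j' a j' = x a j' := congrFun (hyx j') a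
    rw [Finset.sum_apply, Finset.sum_apply, Finset.sum_eq_single j' (fun b _ hb => by simp [hb])
      (by simp)]
    simp [hj']
  rw [hx]
  exact Submodule.sum_mem N fun j _ => N.smul_mem _ (hyN j)

theorem eq_of_map_coordProj_eq {N N' : Submodule (∀ j, Rc j) (α → ∀ j, Rc j)}
    (h : ∀ j, N.map (coordProj Rc α j) = N'.map (coordProj Rc α j)) : N = N' := by
  refine le_antisymm (fun x hx => ?_) (fun x hx => ?_) <;>
    refine mem_of_forall_coordProj_mem_map fun j => ?_
  · exact h j ▸ Submodule.mem_map_of_mem hx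
  · exact (h j).symm ▸ Submodule.mem_map_of_mem hx

end coordProj

theorem rank_of_submodule_eq_sup_rank_of_projections_general
    (ι : Type*) [Fintype ι] [Nonempty ι] (Rc : ι → Type*)
    [∀ j, CommRing (Rc j)] [∀ j, Finite (Rc j)]
    (n : ℕ) (N : Submodule (∀ j, Rc j) (Fin n → ∀ j, Rc j)) :
    subrank N =
      Finset.univ.sup' Finset.univ_nonempty (fun j =>
        subrank (Submodule.span (Rc j)
          ((fun (v : Fin n → ∀ j, Rc j) (i : Fin n) => v i j) ''
            (N : Set (Fin n → ∀ j, Rc j))))) := by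
  have hN : N.FG := Submodule.fg_def.mpr ⟨N, Set.toFinite _, Submodule.span_eq N⟩
  simp only [span_image_coordProj]
  refine le_antisymm ?_ (Finset.sup'_le _ _ fun j _ => subrank_map_le _ hN)
  choose g hg using fun j => exists_span_eq_of_subrank_le (hN.map (coordProj Rc (Fin n) j))
    (Finset.le_sup' (fun j => subrank (N.map (coordProj Rc (Fin n) j))) (Finset.mem_univ j))
  refine subrank_le_of_span_eq (fun i a j => g j i a) (eq_of_map_coordProj_eq fun j => ?_)
  rw [Submodule.map_span, ← Set.range_comp]
  exact hg j

/-- Let `R ≅ R₁ × ⋯ × R_ρ` be a finite commutative principal ideal ring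
decomposed (via the structure theorem) into finite chain rings, and let `Φⱼ` be the `j`-th
coordinate projection applied coefficient-by-coefficient.  Then for any `R`-submodule `N` of
`R^n` we have `rk_R(N) = max_j rk_{Rⱼ}(Φⱼ(N))`. -/
theorem rank_of_submodule_eq_sup_rank_of_projections
    (ι : Type*) [Fintype ι] [Nonempty ι] (Rc : ι → Type*)
    [∀ j, CommRing (Rc j)] [∀ j, Finite (Rc j)] [∀ j, IsLocalRing (Rc j)]
    [∀ j, IsPrincipalIdealRing (Rc j)]
    (n : ℕ) (N : Submodule (∀ j, Rc j) (Fin n → ∀ j, Rc j)) :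
    subrank N =
      Finset.univ.sup' Finset.univ_nonempty (fun j =>
        subrank (Submodule.span (Rc j)
          ((fun (v : Fin n → ∀ j, Rc j) (i : Fin n) => v i j) ''
            (N : Set (Fin n → ∀ j, Rc j))))) :=
  rank_of_submodule_eq_sup_rank_of_projections_general ι Rc n N
end

section
/- Let R be a finite commutative principal ideal ring with decomposition R ≅ R_(1) × ⋯ × R_(ρ) into finite chain rings, and let S = S_(1) × ⋯ × S_(ρ) be a Galois extension of R of degree m, where each S_(j) is a Galois extension of R_(j) of degree m. Then for any vector a ∈ S^n, rk_R(a) = max_{1 ≤ j ≤ ρ} rk_{R_(j)}(Φ_(j)(a)), where Φ_(j) is the j-th projection applied coefficient-by-coefficient. -/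
open IsLocalRing

lemma mem_piSpan {ι : Type*} [Fintype ι] [DecidableEq ι] {Rc Sc : ι → Type*}
    [∀ j, Semiring (Rc j)] [∀ j, AddCommMonoid (Sc j)] [∀ j, Module (Rc j) (Sc j)]
    {K : ℕ} (g : Fin K → ∀ j, Sc j) (x : ∀ j, Sc j) :
    x ∈ Submodule.span (∀ j, Rc j) (Set.range g) ↔
      ∀ j, x j ∈ Submodule.span (Rc j) (Set.range fun i => g i j) := by
  constructor
  · intro hx j
    induction hx using Submodule.span_induction with
    | mem y hy =>
      obtain ⟨i, rfl⟩ := hy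
      exact Submodule.subset_span ⟨i, rfl⟩
    | zero => exact Submodule.zero_mem _
    | add y z _ _ hy hz => exact Submodule.add_mem _ hy hz
    | smul r y _ hy => exact Submodule.smul_mem _ (r j) hy
  · intro hx
    have : x = ∑ j, Pi.single j (x j) := (Finset.univ_sum_single x).symm
    rw [this]
    refine Submodule.sum_mem _ fun j _ => ?_
    obtain ⟨c, hc⟩ := (Submodule.mem_span_range_iff_exists_fun _).mp (hx j)
    have : Pi.single j (x j) = ∑ i, (Pi.single j (c i) : ∀ j', Rc j') • g i := by
      funext j'
      by_cases h : j' = j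
      · subst h
        simp only [Finset.sum_apply, Pi.smul_apply', Pi.single_eq_same]
        exact hc.symm
      · simp [Pi.single_eq_of_ne h]
    rw [this]
    exact Submodule.sum_mem _ fun i _ =>
      Submodule.smul_mem _ _ (Submodule.subset_span ⟨i, rfl⟩)

/-- Let `R ≅ R₁ × ⋯ × R_ρ` be a finite commutative principal ideal ring
decomposed into finite chain rings and `S = S₁ × ⋯ × S_ρ` a Galois extension of `R` of degree
`m`, where each `Sⱼ` is a Galois extension of the finite chain ring `Rⱼ` of degree `m`.
Then for any vector `a ∈ S^n`, `rk_R(a) = max_j rk_{Rⱼ}(Φⱼ(a))`, where `Φⱼ` is the `j`-th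
projection applied coefficient-by-coefficient. -/
theorem rank_of_vector_eq_sup_rank_of_projections
    (ι : Type*) [Fintype ι] [Nonempty ι] (Rc Sc : ι → Type*)
    [∀ j, CommRing (Rc j)] [∀ j, Finite (Rc j)] [∀ j, IsLocalRing (Rc j)]
    [∀ j, IsPrincipalIdealRing (Rc j)]
    [∀ j, CommRing (Sc j)] [∀ j, Finite (Sc j)] [∀ j, IsLocalRing (Sc j)]
    [∀ j, IsPrincipalIdealRing (Sc j)]
    [∀ j, Algebra (Rc j) (Sc j)] [∀ j, Module.Free (Rc j) (Sc j)]
    (m : ℕ) (hm : ∀ j, Module.finrank (Rc j) (Sc j) = m)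
    (hGal : ∀ j, maximalIdeal (Sc j) =
      Ideal.map (algebraMap (Rc j) (Sc j)) (maximalIdeal (Rc j)))
    (n : ℕ) (a : Fin n → ∀ j, Sc j) :
    vecrank (∀ j, Rc j) a =
      Finset.univ.sup' Finset.univ_nonempty
        (fun j => vecrank (Rc j) (fun i => a i j)) := by

  classical
  set K := Finset.univ.sup' (Finset.univ_nonempty : (Finset.univ : Finset ι).Nonempty)
    (fun j => vecrank (Rc j) (fun i => a i j)) with hK
  apply le_antisymm
  · -- build generators of size K
    have hwit : ∀ j, ∃ f : Fin (vecrank (Rc j) (fun i => a i j)) → Sc j,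
        Submodule.span (Rc j) (Set.range f) =
          Submodule.span (Rc j) (Set.range fun i => a i j) := fun j =>
      Nat.sInf_mem (s := {k | ∃ f : Fin k → Sc j, Submodule.span (Rc j) (Set.range f) =
        Submodule.span (Rc j) (Set.range fun i => a i j)}) ⟨n, fun i => a i j, rfl⟩
    choose f hf using hwit
    set g : Fin K → ∀ j, Sc j := fun i j =>
      if h : (i : ℕ) < vecrank (Rc j) (fun i => a i j) then f j ⟨i, h⟩ else 0 with hg
    have hgspan : ∀ j, Submodule.span (Rc j) (Set.range fun i => g i j) =
        Submodule.span (Rc j) (Set.range fun i => a i j) := by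
      intro j
      rw [← hf j]
      apply le_antisymm
      · rw [Submodule.span_le]
        rintro _ ⟨i, rfl⟩
        simp only [hg]
        split
        · exact Submodule.subset_span ⟨_, rfl⟩
        · exact Submodule.zero_mem _
      · rw [Submodule.span_le]
        rintro _ ⟨i, rfl⟩
        have hle : vecrank (Rc j) (fun i => a i j) ≤ K :=
          hK ▸ Finset.le_sup' (fun j => vecrank (Rc j) (fun i => a i j)) (Finset.mem_univ j)
        have : f j i = g ⟨(i : ℕ), lt_of_lt_of_le i.2 hle⟩ j := by
          simp only [hg]
          rw [dif_pos i.2]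
        rw [this]
        exact Submodule.subset_span ⟨_, rfl⟩
    have hspan : Submodule.span (∀ j, Rc j) (Set.range g) =
        Submodule.span (∀ j, Rc j) (Set.range a) := by
      ext x
      rw [mem_piSpan, mem_piSpan]
      exact forall_congr' fun j => by rw [hgspan j]
    exact Nat.sInf_le ⟨g, hspan⟩
  · -- each component rank ≤ vecrank over the product
    refine Finset.sup'_le _ _ fun j _ => ?_
    obtain ⟨F, hF⟩ : ∃ F : Fin (vecrank (∀ j, Rc j) a) → ∀ j, Sc j,
        Submodule.span (∀ j, Rc j) (Set.range F) =
          Submodule.span (∀ j, Rc j) (Set.range a) :=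
      Nat.sInf_mem (s := {k | ∃ f : Fin k → ∀ j, Sc j,
        Submodule.span (∀ j, Rc j) (Set.range f) =
          Submodule.span (∀ j, Rc j) (Set.range a)}) ⟨n, a, rfl⟩
    refine Nat.sInf_le ⟨fun i => F i j, ?_⟩
    apply le_antisymm
    · rw [Submodule.span_le]
      rintro _ ⟨i, rfl⟩
      exact (mem_piSpan a (F i)).mp (hF ▸ Submodule.subset_span ⟨i, rfl⟩) j
    · rw [Submodule.span_le]
      rintro _ ⟨i, rfl⟩
      exact (mem_piSpan F (a i)).mp (hF.symm ▸ Submodule.subset_span ⟨i, rfl⟩) j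
end

section
/- Let R be a finite commutative chain ring and S a Galois extension of R of degree m (so S is a finite chain ring). For any linear code C of length n over S (an S-submodule of S^n), k(C) = k(soc(C)) = k(E(C)) and d(C) = d(soc(C)) = d(E(C)), i.e., C has the same rank and the same minimum rank distance as its socle and its injective envelope. -/
open IsLocalRing

/-- The socle of a submodule `C` of an ambient module, as a submodule of the ambient
module: the sum of the minimal nonzero submodules contained in `C`. -/
noncomputable def socleIn {R M : Type*} [Semiring R] [AddCommMonoid M] [Module R M]
    (C : Submodule R M) : Submodule R M :=
  sSup {N : Submodule R M | IsAtom N ∧ N ≤ C}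
/-!
Over a finite chain ring `S` with maximal ideal `𝔪 = (θ)`, the minimal submodules of a module are
the cyclic submodules `S x` with `x ≠ 0` and `θ x = 0`, so `soc N = N ∩ ker θ`. By Nakayama, `k(N)`
is the dimension of `N / 𝔪 N` over `S / 𝔪`, and `N / θ N` has as many elements as the kernel of `θ`
on `N`; hence `|S / 𝔪| ^ k(N) = |soc N|` and the rank of `N` only depends on its socle. An
essential extension `C ≤ E` has the same minimal submodules as `C`, and `soc (soc C) = soc C`.

For the distance: every nonzero word `w` of `E` has a nonzero multiple `c w` in `C`, every nonzero
word of `C` has a nonzero multiple `θ ^ j w` in `soc C` (as `θ` is nilpotent), and multiplying a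
word by a scalar of `S` does not increase its rank over `R`.
-/

theorem Nat.sInf_eq_of_subset_of_forall_exists_le {s t : Set ℕ} (hst : s ⊆ t)
    (h : ∀ a ∈ t, ∃ b ∈ s, b ≤ a) : sInf s = sInf t := by
  rcases t.eq_empty_or_nonempty with rfl | ht
  · rw [Set.subset_empty_iff.mp hst]
  obtain ⟨b, hb, hba⟩ := h _ (Nat.sInf_mem ht)
  exact le_antisymm ((Nat.sInf_le hb).trans hba) (Nat.sInf_le (hst (Nat.sInf_mem ⟨b, hb⟩)))

theorem exists_pow_smul_ne_zero_and_smul_eq_zero {S M : Type*} [MonoidWithZero S] [Zero M]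
    [MulActionWithZero S M] {θ : S} (hθ : IsNilpotent θ) {w : M} (hw : w ≠ 0) :
    ∃ j : ℕ, θ ^ j • w ≠ 0 ∧ θ • θ ^ j • w = 0 := by
  obtain ⟨e, he⟩ := hθ
  by_contra! h
  have hpow : ∀ j : ℕ, θ ^ j • w ≠ 0 := fun j => by
    induction j with
    | zero => simpa using hw
    | succ j ih => rw [pow_succ', mul_smul]; exact h j ih
  exact hpow e (by rw [he, zero_smul])

section SpanRank

variable {R M : Type*} [Semiring R] [AddCommMonoid M] [Module R M]

theorem spanFinrank_span_range_le {k : ℕ} (f : Fin k → M) :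
    (Submodule.span R (Set.range f)).spanFinrank ≤ k := by
  refine (Submodule.spanFinrank_span_le_ncard_of_finite (Set.finite_range f)).trans ?_
  simpa [← Nat.card_coe_set_eq] using Finite.card_range_le f

theorem subrank_eq_spanFinrank (N : Submodule R M) : subrank N = N.spanFinrank := by
  by_cases hN : N.FG
  · obtain ⟨s, hs_card, hs_span⟩ := hN.exists_span_finset_card_eq_spanFinrank
    have hgen : N.spanFinrank ∈ {k | ∃ f : Fin k → M, Submodule.span R (Set.range f) = N} := by
      let e : Fin N.spanFinrank ≃ s := (finCongr hs_card.symm).trans s.equivFin.symm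
      refine ⟨(↑) ∘ e, ?_⟩
      rw [e.surjective.range_comp, Subtype.range_coe, ← hs_span]
    apply le_antisymm (Nat.sInf_le hgen)
    obtain ⟨f, hf⟩ := Nat.sInf_mem ⟨_, hgen⟩
    have hle := spanFinrank_span_range_le (R := R) f
    rwa [hf] at hle
  · have hempty : {k | ∃ f : Fin k → M, Submodule.span R (Set.range f) = N} = ∅ :=
      Set.eq_empty_of_forall_notMem fun k ⟨f, hf⟩ =>
        hN ⟨(Set.finite_range f).toFinset, by simp [hf]⟩
    rw [subrank, hempty, Nat.sInf_empty, Submodule.spanFinrank_of_not_fg hN]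

end SpanRank

theorem vecrank_smul_le (R : Type*) {S : Type*} {n : ℕ} [CommSemiring R] [Semiring S]
    [Algebra R S] (c : S) (w : Fin n → S) : vecrank R (c • w) ≤ vecrank R w := by
  have hrange : Set.range (c • w) = LinearMap.mulLeft R c '' Set.range w := by
    rw [← Set.range_comp]
    rfl
  rw [vecrank, vecrank, subrank_eq_spanFinrank, subrank_eq_spanFinrank, hrange,
    Submodule.span_image]
  exact Submodule.spanFinrank_map_le_of_fg _ (Submodule.fg_span (Set.finite_range w))

section Socle

variable {S M : Type*} [Semiring S] [AddCommMonoid M] [Module S M]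

theorem socleIn_le (C : Submodule S M) : socleIn C ≤ C :=
  sSup_le fun _ hN => hN.2

theorem socleIn_eq_of_le_of_essential {C E : Submodule S M} (hCE : C ≤ E)
    (hess : ∀ N : Submodule S M, N ≤ E → N ≠ ⊥ → N ⊓ C ≠ ⊥) : socleIn E = socleIn C := by
  have hatoms : {N : Submodule S M | IsAtom N ∧ N ≤ E} = {N | IsAtom N ∧ N ≤ C} := by
    ext N
    refine ⟨fun ⟨hN, hNE⟩ => ⟨hN, ?_⟩, fun ⟨hN, hNC⟩ => ⟨hN, hNC.trans hCE⟩⟩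
    rcases hN.le_iff.mp (inf_le_left : N ⊓ C ≤ N) with hbot | heq
    · exact absurd hbot (hess N hNE hN.1)
    · exact heq ▸ inf_le_right
  rw [socleIn, socleIn, hatoms]

end Socle

section ChainRing

variable {S M : Type*} [CommRing S] [IsLocalRing S] [AddCommGroup M] [Module S M]
  {θ : S}

theorem smul_eq_zero_of_isAtom (hθ : maximalIdeal S = Ideal.span {θ}) {N : Submodule S M}
    (hN : IsAtom N) {x : M} (hx : x ∈ N) : θ • x = 0 := by
  by_contra hθx
  have hspan : Submodule.span S {θ • x} = N :=
    (hN.le_iff.mp ((Submodule.span_singleton_le_iff_mem _ N).mpr (N.smul_mem θ hx))).resolve_left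
      (by simpa using hθx)
  obtain ⟨c, hc⟩ := Submodule.mem_span_singleton.mp (hspan ▸ hx : x ∈ Submodule.span S {θ • x})
  have hunit : IsUnit (1 - c * θ) := by
    refine isUnit_one_sub_self_of_mem_nonunits _ ((mem_maximalIdeal _).mp ?_)
    exact Ideal.mul_mem_left _ c (hθ ▸ Ideal.mem_span_singleton_self θ)
  have hkill : (1 - c * θ) • x = 0 := by rw [sub_smul, one_smul, mul_smul, hc, sub_self]
  exact hθx (by rw [hunit.smul_eq_zero.mp hkill, smul_zero])

theorem isAtom_span_singleton_of_smul_eq_zero (hθ : maximalIdeal S = Ideal.span {θ}) {x : M}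
    (hx : x ≠ 0) (hθx : θ • x = 0) : IsAtom (Submodule.span S {x}) := by
  refine ⟨by simpa using hx, fun N hN => ?_⟩
  by_contra hNbot
  obtain ⟨y, hyN, hy⟩ := (Submodule.ne_bot_iff N).mp hNbot
  obtain ⟨c, rfl⟩ := Submodule.mem_span_singleton.mp (hN.le hyN)
  have hc : IsUnit c := by
    by_contra hc
    obtain ⟨d, rfl⟩ := Ideal.mem_span_singleton'.mp (hθ ▸ (mem_maximalIdeal c).mpr hc)
    exact hy (by rw [mul_smul, hθx, smul_zero])
  exact hN.not_ge ((Submodule.span_singleton_le_iff_mem x N).mpr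
    ((Submodule.smul_mem_iff_of_isUnit N hc).mp hyN))

theorem socleIn_eq_inf_ker (hθ : maximalIdeal S = Ideal.span {θ}) (N : Submodule S M) :
    socleIn N = N ⊓ LinearMap.ker (LinearMap.lsmul S M θ) := by
  apply le_antisymm
  · exact sSup_le fun A ⟨hA, hAN⟩ =>
      le_inf hAN fun x hx => smul_eq_zero_of_isAtom hθ hA hx
  · rintro x ⟨hxN, hθx⟩
    rcases eq_or_ne x 0 with rfl | hx
    · exact zero_mem _
    have hatom : Submodule.span S {x} ∈ {A | IsAtom A ∧ A ≤ N} :=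
      ⟨isAtom_span_singleton_of_smul_eq_zero hθ hx hθx,
        (Submodule.span_singleton_le_iff_mem x N).mpr hxN⟩
    exact le_sSup hatom (Submodule.mem_span_singleton_self x)

end ChainRing

section Counting

variable {S M : Type*} [CommRing S] [IsLocalRing S] [AddCommGroup M] [Module S M] {θ : S}

theorem card_quotient_maximalIdeal_smul_top [Finite M] (hθ : maximalIdeal S = Ideal.span {θ}) :
    Nat.card (M ⧸ maximalIdeal S • (⊤ : Submodule S M)) =
      Nat.card (LinearMap.ker (LinearMap.lsmul S M θ)) := by
  have hrange :
      maximalIdeal S • (⊤ : Submodule S M) = LinearMap.range (LinearMap.lsmul S M θ) := by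
    rw [hθ, Submodule.ideal_span_singleton_smul, ← Submodule.map_top]
    rfl
  rw [hrange]
  exact AddSubgroup.index_range (f := (LinearMap.lsmul S M θ).toAddMonoidHom)

theorem card_socleIn (hθ : maximalIdeal S = Ideal.span {θ}) (N : Submodule S M) :
    Nat.card (socleIn N) = Nat.card (LinearMap.ker (LinearMap.lsmul S N θ)) := by
  have hmap : socleIn N = (LinearMap.ker (LinearMap.lsmul S N θ)).map N.subtype := by
    ext x
    simp [socleIn_eq_inf_ker hθ, and_comm]
  rw [hmap]
  exact (Nat.card_congr (Submodule.equivMapOfInjective _ N.injective_subtype _).toEquiv).symm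

theorem card_residueField_pow_subrank [Finite M] (hθ : maximalIdeal S = Ideal.span {θ})
    (N : Submodule S M) : Nat.card (S ⧸ maximalIdeal S) ^ subrank N = Nat.card (socleIn N) := by
  let := Ideal.Quotient.field (maximalIdeal S)
  rw [subrank_eq_spanFinrank, spanFinrank_eq_finrank_quotient N (Submodule.FG.of_finite),
    ← Module.natCard_eq_pow_finrank, card_quotient_maximalIdeal_smul_top hθ, card_socleIn hθ]

end Counting

section PrincipalMaximalIdeal

variable {S M : Type*} [CommRing S] [IsLocalRing S] [IsPrincipalIdealRing S]
  [AddCommGroup M] [Module S M]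

theorem socleIn_socleIn (N : Submodule S M) : socleIn (socleIn N) = socleIn N := by
  obtain ⟨θ, hθ⟩ := (IsPrincipalIdealRing.principal (maximalIdeal S)).principal
  rw [socleIn_eq_inf_ker hθ (socleIn N), socleIn_eq_inf_ker hθ N, inf_assoc, inf_idem]

theorem subrank_eq_of_socleIn_eq [Finite S] [Finite M] {N₁ N₂ : Submodule S M}
    (h : socleIn N₁ = socleIn N₂) : subrank N₁ = subrank N₂ := by
  obtain ⟨θ, hθ⟩ := (IsPrincipalIdealRing.principal (maximalIdeal S)).principal
  have : Finite (S ⧸ maximalIdeal S) := Finite.of_surjective _ Ideal.Quotient.mk_surjective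
  apply Nat.pow_right_injective (Finite.one_lt_card : 1 < Nat.card (S ⧸ maximalIdeal S))
  simp only [card_residueField_pow_subrank hθ, h]

end PrincipalMaximalIdeal

section MinRankDistance

variable (K : Type*) {S : Type*} {n : ℕ}

theorem minrkdist_eq_sInf_image [Semiring K] [Ring S] [Module K S]
    (C : Submodule S (Fin n → S)) :
    minrkdist K C = sInf (vecrank K '' ((C : Set (Fin n → S)) \ {0})) := by
  rw [minrkdist]
  congr 1
  ext d
  constructor
  · rintro ⟨u, hu, v, hv, huv, rfl⟩
    exact ⟨u - v, ⟨sub_mem hu hv, sub_ne_zero.mpr huv⟩, rfl⟩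
  · rintro ⟨w, ⟨hw, hw0⟩, rfl⟩
    exact ⟨w, hw, 0, zero_mem _, hw0, by rw [sub_zero]⟩

variable {K}

theorem minrkdist_eq_of_le_of_forall_exists_vecrank_le [Semiring K] [Ring S] [Module K S]
    {C₁ C₂ : Submodule S (Fin n → S)} (h : C₁ ≤ C₂)
    (hdom : ∀ w ∈ C₂, w ≠ 0 → ∃ w' ∈ C₁, w' ≠ 0 ∧ vecrank K w' ≤ vecrank K w) :
    minrkdist K C₁ = minrkdist K C₂ := by
  rw [minrkdist_eq_sInf_image, minrkdist_eq_sInf_image]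
  refine Nat.sInf_eq_of_subset_of_forall_exists_le
    (Set.image_mono (Set.sdiff_subset_sdiff_left h)) ?_
  rintro _ ⟨w, ⟨hw, hw0⟩, rfl⟩
  obtain ⟨w', hw', hw'0, hle⟩ := hdom w hw hw0
  exact ⟨_, ⟨w', ⟨hw', hw'0⟩, rfl⟩, hle⟩

variable (K)

theorem minrkdist_eq_of_le_of_essential [CommSemiring K] [Ring S] [Algebra K S]
    {C E : Submodule S (Fin n → S)} (hCE : C ≤ E)
    (hess : ∀ N : Submodule S (Fin n → S), N ≤ E → N ≠ ⊥ → N ⊓ C ≠ ⊥) :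
    minrkdist K C = minrkdist K E := by
  refine minrkdist_eq_of_le_of_forall_exists_vecrank_le hCE fun w hw hw0 => ?_
  have hw_le : Submodule.span S {w} ≤ E := (Submodule.span_singleton_le_iff_mem w E).mpr hw
  obtain ⟨x, hx, hx0⟩ := (Submodule.ne_bot_iff _).mp (hess _ hw_le (by simpa using hw0))
  obtain ⟨c, rfl⟩ := Submodule.mem_span_singleton.mp (Submodule.mem_inf.mp hx).1
  exact ⟨c • w, (Submodule.mem_inf.mp hx).2, hx0, vecrank_smul_le K c w⟩

theorem minrkdist_socleIn [CommSemiring K] [CommRing S] [Finite S] [IsLocalRing S]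
    [IsPrincipalIdealRing S] [Algebra K S] (C : Submodule S (Fin n → S)) :
    minrkdist K (socleIn C) = minrkdist K C := by
  obtain ⟨θ, hθ⟩ := (IsPrincipalIdealRing.principal (maximalIdeal S)).principal
  have hθ_nil : IsNilpotent θ :=
    Ring.KrullDimLE.isNilpotent_iff_mem_maximalIdeal.mpr (hθ ▸ Ideal.mem_span_singleton_self θ)
  refine minrkdist_eq_of_le_of_forall_exists_vecrank_le (socleIn_le C) fun w hw hw0 => ?_
  obtain ⟨j, hj, hθj⟩ := exists_pow_smul_ne_zero_and_smul_eq_zero hθ_nil hw0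
  refine ⟨θ ^ j • w, ?_, hj, vecrank_smul_le K _ w⟩
  rw [socleIn_eq_inf_ker hθ]
  exact ⟨C.smul_mem _ hw, hθj⟩

end MinRankDistance

theorem rank_and_minDist_eq_of_socle_and_injectiveEnvelope_general
    (R S : Type*) [CommRing R]
    [CommRing S] [Finite S] [IsLocalRing S] [IsPrincipalIdealRing S]
    [Algebra R S]
    (n : ℕ) (C E : Submodule S (Fin n → S)) (hCE : C ≤ E)
    (hess : ∀ N : Submodule S (Fin n → S), N ≤ E → N ≠ ⊥ → N ⊓ C ≠ ⊥) :
    (subrank C = subrank (socleIn C) ∧ subrank C = subrank E) ∧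
    (minrkdist R C = minrkdist R (socleIn C) ∧ minrkdist R C = minrkdist R E) := by
  have hsocle : socleIn E = socleIn C := socleIn_eq_of_le_of_essential hCE hess
  exact ⟨⟨subrank_eq_of_socleIn_eq (socleIn_socleIn C).symm,
      subrank_eq_of_socleIn_eq hsocle.symm⟩,
    ⟨(minrkdist_socleIn R C).symm, minrkdist_eq_of_le_of_essential R hCE hess⟩⟩

/-- Let `R` be a finite commutative chain ring and `S` a Galois extension of
`R` of degree `m` (so `S` is a finite chain ring).  For any linear code `C` of length `n`
over `S` (an `S`-submodule of `S^n`) with injective envelope `E ⊆ S^n` (an injective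
`S`-module containing `C` essentially), `k(C) = k(soc(C)) = k(E(C))` and
`d(C) = d(soc(C)) = d(E(C))`. -/
theorem rank_and_minDist_eq_of_socle_and_injectiveEnvelope
    (R S : Type*) [CommRing R] [Finite R] [IsLocalRing R] [IsPrincipalIdealRing R]
    [CommRing S] [Finite S] [IsLocalRing S] [IsPrincipalIdealRing S]
    [Algebra R S] [Module.Free R S]
    (m : ℕ) (hm : Module.finrank R S = m)
    (hGal : maximalIdeal S = Ideal.map (algebraMap R S) (maximalIdeal R))
    (n : ℕ) (C E : Submodule S (Fin n → S)) (hCE : C ≤ E) [Module.Injective S ↥E]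
    (hess : ∀ N : Submodule S (Fin n → S), N ≤ E → N ≠ ⊥ → N ⊓ C ≠ ⊥) :
    (subrank C = subrank (socleIn C) ∧ subrank C = subrank E) ∧
    (minrkdist R C = minrkdist R (socleIn C) ∧ minrkdist R C = minrkdist R E) :=
  rank_and_minDist_eq_of_socle_and_injectiveEnvelope_general R S n C E hCE hess
end

section
/- Let R be a finite commutative chain ring with residue field F_q, S a Galois extension of R of degree m with residue field F_{q^m}, and Ψ : S → F_{q^m} the natural projection. A subset {b_1,…,b_t} of S is R-linearly independent if and only if {Ψ(b_1),…,Ψ(b_t)} is F_q-linearly independent. -/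
/-!
Over an Artinian local ring `R` some `a ≠ 0` annihilates the maximal ideal `𝔪`, hence annihilates
`𝔪S = M`. If `∑ cᵢ Ψ(bᵢ) = 0` and `rᵢ ∈ R` lift the `cᵢ`, then `∑ rᵢ bᵢ ∈ M`, so
`∑ (a rᵢ) bᵢ = 0`; independence of the `bᵢ` gives `a rᵢ = 0`, which forces every `rᵢ` into `𝔪`.
Conversely, `S` is free and hence flat over `R`, and for flat modules over a local ring
independence modulo `𝔪` lifts to independence.
-/

open IsLocalRing

theorem Ideal.exists_ne_zero_forall_mul_eq_zero_of_isNilpotent {R : Type*} [CommSemiring R]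
    [Nontrivial R] {I : Ideal R} (hI : IsNilpotent I) : ∃ a ≠ 0, ∀ r ∈ I, a * r = 0 := by
  have hn : nilpotencyClass I ≠ 0 := (pos_nilpotencyClass_iff.mpr hI).ne'
  obtain ⟨a, ha, ha0⟩ := Submodule.exists_mem_ne_zero_of_ne_bot (pow_pred_nilpotencyClass hI)
  refine ⟨a, ha0, fun r hr => ?_⟩
  have : a * r ∈ I ^ nilpotencyClass I := pow_sub_one_mul hn I ▸ Ideal.mul_mem_mul ha hr
  rwa [pow_nilpotencyClass hI, Ideal.zero_eq_bot, Ideal.mem_bot] at this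

theorem Submodule.smul_eq_zero_of_mem_ideal_smul {R M : Type*} [CommSemiring R]
    [AddCommMonoid M] [Module R M] {I : Ideal R} {N : Submodule R M} {a : R}
    (ha : ∀ r ∈ I, a * r = 0) {x : M} (hx : x ∈ I • N) : a • x = 0 := by
  refine Submodule.smul_induction_on hx (fun r hr n _ => ?_) (fun x y hx hy => ?_)
  · rw [smul_smul, ha r hr, zero_smul]
  · rw [smul_add, hx, hy, add_zero]

theorem LinearIndependent.map_of_ker_le_maximalIdeal_smul {R S V ι : Type*} [CommRing R]
    [IsLocalRing R] [IsArtinianRing R] [AddCommGroup S] [Module R S] [AddCommGroup V]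
    [Module R V] [Module (ResidueField R) V] [IsScalarTower R (ResidueField R) V]
    {b : ι → S} (hb : LinearIndependent R b) (f : S →ₗ[R] V)
    (hf : LinearMap.ker f ≤ maximalIdeal R • ⊤) :
    LinearIndependent (ResidueField R) (f ∘ b) := by
  obtain ⟨a, ha0, ha⟩ := Ideal.exists_ne_zero_forall_mul_eq_zero_of_isNilpotent
    ((isArtinianRing_iff_isNilpotent_maximalIdeal R).mp ‹_›)
  rw [linearIndependent_iff'] at hb ⊢
  intro s c hc i hi
  choose r hr using fun j => residue_surjective (c j)
  have hker : ∑ j ∈ s, r j • b j ∈ LinearMap.ker f := by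
    simpa [← hr, ← ResidueField.algebraMap_eq, algebraMap_smul] using hc
  have hkill : ∑ j ∈ s, (a * r j) • b j = 0 := by
    simpa only [Finset.smul_sum, smul_smul] using
      Submodule.smul_eq_zero_of_mem_ideal_smul ha (hf hker)
  rw [← hr, residue_eq_zero_iff]
  by_contra hri
  exact ha0 ((notMem_maximalIdeal.mp hri).mul_left_eq_zero.mp (hb s _ hkill i hi))

theorem LinearIndependent.of_comp_of_flat {R S V ι : Type*} [CommRing R] [IsLocalRing R]
    [AddCommGroup S] [Module R S] [Module.Flat R S] [AddCommMonoid V] [Module R V]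
    [Module (ResidueField R) V] [IsScalarTower R (ResidueField R) V] {b : ι → S}
    (f : S →ₗ[R] V) (hb : LinearIndependent (ResidueField R) (f ∘ b)) :
    LinearIndependent R b :=
  Module.IsLocalRing.linearIndependent_of_flat b <|
    .of_comp (f.liftBaseChange (ResidueField R)) (by convert hb using 1; ext; simp)

/- Not a definitional equality: Mathlib's instance is the one of `S ⧸ 𝔪_S` over `R ⧸ 𝔪_R`. -/
theorem IsLocalRing.ResidueField.map_toModule_eq (R S : Type*) [CommRing R] [IsLocalRing R]
    [CommRing S] [IsLocalRing S] [Algebra R S] [IsLocalHom (algebraMap R S)] :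
    (ResidueField.map (algebraMap R S)).toAlgebra.toModule =
      (inferInstance : Module (ResidueField R) (ResidueField S)) := by
  refine Module.ext' _ _ fun x y => ?_
  obtain ⟨x, rfl⟩ := residue_surjective x
  show ResidueField.map (algebraMap R S) (residue R x) * y = residue R x • y
  rw [ResidueField.map_residue, Algebra.smul_def, ResidueField.algebraMap_residue]

theorem linearIndependent_iff_linearIndependent_residue_general
    (R S : Type*) [CommRing R] [Finite R] [IsLocalRing R]
    [CommRing S] [IsLocalRing S]
    [Algebra R S] [IsLocalHom (algebraMap R S)] [Module.Free R S]
    (hGal : maximalIdeal S = Ideal.map (algebraMap R S) (maximalIdeal R))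
    (t : ℕ) (b : Fin t → S) :
    letI : Module (ResidueField R) (ResidueField S) :=
      (ResidueField.map (algebraMap R S)).toAlgebra.toModule
    (LinearIndependent R b ↔
      LinearIndependent (ResidueField R) (fun i => residue S (b i))) := by
  rw [ResidueField.map_toModule_eq]
  let Ψ : S →ₗ[R] ResidueField S := (Ideal.Quotient.mkₐ R (maximalIdeal S)).toLinearMap
  have hker : LinearMap.ker Ψ ≤ maximalIdeal R • ⊤ := by
    rw [Ideal.smul_top_eq_map, ← hGal]
    exact fun x hx => (residue_eq_zero_iff x).mp hx
  exact ⟨fun hb => hb.map_of_ker_le_maximalIdeal_smul Ψ hker, .of_comp_of_flat Ψ⟩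

/-- Let `R` be a finite commutative chain ring with residue field `F_q`,
`S` a Galois extension of `R` of degree `m` with residue field `F_{q^m}`, and
`Ψ : S → F_{q^m}` the natural projection.  A family `b₁, …, b_t` of elements of `S` is
`R`-linearly independent iff `Ψ(b₁), …, Ψ(b_t)` is `F_q`-linearly independent
(`F_{q^m}` being an `F_q`-vector space via the induced map of residue fields). -/
theorem linearIndependent_iff_linearIndependent_residue
    (R S : Type*) [CommRing R] [Finite R] [IsLocalRing R] [IsPrincipalIdealRing R]
    [CommRing S] [Finite S] [IsLocalRing S] [IsPrincipalIdealRing S]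
    [Algebra R S] [IsLocalHom (algebraMap R S)] [Module.Free R S]
    (m : ℕ) (hm : Module.finrank R S = m)
    (hGal : maximalIdeal S = Ideal.map (algebraMap R S) (maximalIdeal R))
    (t : ℕ) (b : Fin t → S) :
    letI : Module (ResidueField R) (ResidueField S) :=
      (ResidueField.map (algebraMap R S)).toAlgebra.toModule
    (LinearIndependent R b ↔
      LinearIndependent (ResidueField R) (fun i => residue S (b i))) :=
  linearIndependent_iff_linearIndependent_residue_general R S hGal t b
end

section
/- Let R be a finite commutative chain ring with maximal ideal generated by π of nilpotency index ν and residue field F_q, and S a Galois extension of R of degree m with residue field F_{q^m} and natural projection Ψ : S → F_{q^m}, extended coefficient-by-coefficient to S^n. For any a ∈ S^n, rk_R(π^(ν−1) a) = rk_{F_q}(Ψ(a)). -/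
open IsLocalRing

/-!
Since `𝔪_S = π S`, the nonzero element `π^(ν-1)` of `S` annihilates `𝔪_S`, so multiplication by
it induces an injective `R`-linear map `F_{q^m} → S`, `Ψ(x) ↦ π^(ν-1) x`. Hence the `R`-span of
`π^(ν-1) a` is the isomorphic image of the `R`-span of `Ψ(a)`; and as `R` acts on `F_{q^m}`
through the surjection `R → F_q`, the `R`-spans there are the `F_q`-spans. Minimal numbers of
generators are preserved by both identifications.
-/
theorem subrank_map_of_injective {R M M' : Type*} [Semiring R] [AddCommMonoid M]
    [AddCommMonoid M'] [Module R M] [Module R M'] {f : M →ₗ[R] M'}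
    (hf : Function.Injective f) (N : Submodule R M) :
    subrank (N.map f) = subrank N := by
  unfold subrank
  congr 1
  ext k
  constructor
  · rintro ⟨g, hg⟩
    have hg_range : ∀ i, ∃ x, f x = g i := fun i =>
      let ⟨x, _, hx⟩ := (hg ▸ Submodule.subset_span (Set.mem_range_self i) : g i ∈ N.map f)
      ⟨x, hx⟩
    choose h hh using hg_range
    refine ⟨h, Submodule.map_injective_of_injective hf ?_⟩
    rw [Submodule.map_span, ← Set.range_comp, ← hg]
    exact congrArg _ (congrArg Set.range (funext hh))
  · rintro ⟨h, hh⟩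
    exact ⟨f ∘ h, by rw [Set.range_comp, ← Submodule.map_span, hh]⟩

theorem subrank_restrictScalars {R A M : Type*} [CommSemiring R] [Semiring A] [Algebra R A]
    [AddCommMonoid M] [Module R M] [Module A M] [IsScalarTower R A M]
    (hsur : Function.Surjective (algebraMap R A)) (N : Submodule A M) :
    subrank (N.restrictScalars R) = subrank N := by
  unfold subrank
  simp only [← Submodule.restrictScalars_span R A hsur, Submodule.restrictScalars_inj]

theorem vecrank_comp_of_injective {R M M' : Type*} [Semiring R] [AddCommMonoid M]
    [AddCommMonoid M'] [Module R M] [Module R M'] {f : M →ₗ[R] M'}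
    (hf : Function.Injective f) {n : ℕ} (u : Fin n → M) :
    vecrank R (f ∘ u) = vecrank R u := by
  rw [vecrank, Set.range_comp, ← Submodule.map_span, subrank_map_of_injective hf, vecrank]

theorem vecrank_of_surjective_algebraMap {R A M : Type*} [CommSemiring R] [Semiring A]
    [Algebra R A] [AddCommMonoid M] [Module R M] [Module A M] [IsScalarTower R A M]
    (hsur : Function.Surjective (algebraMap R A)) {n : ℕ} (u : Fin n → M) :
    vecrank R u = vecrank A u := by
  rw [vecrank, ← Submodule.restrictScalars_span R A hsur, subrank_restrictScalars hsur, vecrank]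

namespace IsLocalRing

variable {S : Type*} [CommRing S] [IsLocalRing S]

theorem mul_eq_zero_iff_mem_maximalIdeal {t : S} (ht : t ≠ 0)
    (hmax : ∀ z ∈ maximalIdeal S, t * z = 0) (z : S) :
    t * z = 0 ↔ z ∈ maximalIdeal S := by
  refine ⟨fun htz => ?_, hmax z⟩
  by_contra hz
  exact ht ((notMem_maximalIdeal.mp hz).mul_left_eq_zero.mp htz)

variable (S) in
def mulResidue (t : S) (hmax : ∀ z ∈ maximalIdeal S, t * z = 0) : ResidueField S →ₗ[S] S :=
  (maximalIdeal S).liftQ (LinearMap.mulLeft S t) hmax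

@[simp]
theorem mulResidue_residue (t : S) (hmax : ∀ z ∈ maximalIdeal S, t * z = 0) (z : S) :
    mulResidue S t hmax (residue S z) = t * z :=
  rfl

theorem mulResidue_injective {t : S} (ht : t ≠ 0) (hmax : ∀ z ∈ maximalIdeal S, t * z = 0) :
    Function.Injective (mulResidue S t hmax) := by
  refine (injective_iff_map_eq_zero _).mpr fun x hx => ?_
  obtain ⟨z, rfl⟩ := residue_surjective x
  rw [mulResidue_residue, mul_eq_zero_iff_mem_maximalIdeal ht hmax] at hx
  exact (residue_eq_zero_iff z).mpr hx

end IsLocalRing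

theorem IsLocalRing.ResidueField.map_toAlgebra {R S : Type*} [CommRing R] [IsLocalRing R]
    [CommRing S] [IsLocalRing S] [Algebra R S] [IsLocalHom (algebraMap R S)] :
    (ResidueField.map (algebraMap R S)).toAlgebra =
      (inferInstance : Algebra (ResidueField R) (ResidueField S)) :=
  Algebra.algebra_ext _ _ fun x => by
    obtain ⟨r, rfl⟩ := residue_surjective x
    rfl

theorem algebraMap_pow_pred_mul_eq_zero {R S : Type*} [CommRing R] [IsLocalRing R]
    [CommRing S] [IsLocalRing S] [Algebra R S] {π : R} {ν : ℕ}
    (hπ : Ideal.span {π} = maximalIdeal R) (hν : 0 < ν)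
    (hνnil : π ^ ν = 0) (hGal : maximalIdeal S = Ideal.map (algebraMap R S) (maximalIdeal R))
    (z : S) (hz : z ∈ maximalIdeal S) : algebraMap R S (π ^ (ν - 1)) * z = 0 := by
  rw [hGal, ← hπ, Ideal.map_span, Set.image_singleton, Ideal.mem_span_singleton'] at hz
  obtain ⟨c, rfl⟩ := hz
  rw [mul_left_comm, ← map_mul, ← pow_succ, Nat.sub_add_cancel hν, hνnil, map_zero, mul_zero]

theorem rank_smul_pow_eq_rank_residue_general
    (R S : Type*) [CommRing R] [IsLocalRing R]
    [CommRing S] [IsLocalRing S]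
    [Algebra R S] [IsLocalHom (algebraMap R S)] [Module.Free R S]
    (π : R) (hπ : Ideal.span {π} = maximalIdeal R)
    (ν : ℕ) (hν : 0 < ν) (hνnil : π ^ ν = 0) (hνmin : π ^ (ν - 1) ≠ 0)
    (hGal : maximalIdeal S = Ideal.map (algebraMap R S) (maximalIdeal R))
    (n : ℕ) (a : Fin n → S) :
    letI : Module (ResidueField R) (ResidueField S) :=
      (ResidueField.map (algebraMap R S)).toAlgebra.toModule
    vecrank R (π ^ (ν - 1) • a) =
      vecrank (ResidueField R) (fun i => residue S (a i)) := by
  rw [ResidueField.map_toAlgebra]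
  show vecrank R (π ^ (ν - 1) • a) = vecrank (ResidueField R) (residue S ∘ a)
  have ht : algebraMap R S (π ^ (ν - 1)) ≠ 0 :=
    (map_ne_zero_iff _ (FaithfulSMul.algebraMap_injective R S)).mpr hνmin
  have hmax := algebraMap_pow_pred_mul_eq_zero (S := S) hπ hν hνnil hGal
  calc vecrank R (π ^ (ν - 1) • a)
      = vecrank R ((mulResidue S _ hmax).restrictScalars R ∘ residue S ∘ a) := by
        congr 1
        ext i
        exact Algebra.smul_def _ _
    _ = vecrank R (residue S ∘ a) :=
        vecrank_comp_of_injective (f := (mulResidue S _ hmax).restrictScalars R)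
          (mulResidue_injective ht hmax) _
    _ = vecrank (ResidueField R) (residue S ∘ a) :=
        vecrank_of_surjective_algebraMap residue_surjective _

/-- Let `R` be a finite commutative chain ring with maximal ideal generated
by `π` of nilpotency index `ν` and residue field `F_q`, and `S` a Galois extension of `R` of
degree `m` with residue field `F_{q^m}` and natural projection `Ψ : S → F_{q^m}`, extended
coefficient-by-coefficient to `S^n`.  For any `a ∈ S^n`,
`rk_R(π^(ν−1) a) = rk_{F_q}(Ψ(a))`. -/
theorem rank_smul_pow_eq_rank_residue
    (R S : Type*) [CommRing R] [Finite R] [IsLocalRing R] [IsPrincipalIdealRing R]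
    [CommRing S] [Finite S] [IsLocalRing S] [IsPrincipalIdealRing S]
    [Algebra R S] [IsLocalHom (algebraMap R S)] [Module.Free R S]
    (π : R) (hπ : Ideal.span {π} = maximalIdeal R)
    (ν : ℕ) (hν : 0 < ν) (hνnil : π ^ ν = 0) (hνmin : π ^ (ν - 1) ≠ 0)
    (m : ℕ) (hm : Module.finrank R S = m)
    (hGal : maximalIdeal S = Ideal.map (algebraMap R S) (maximalIdeal R))
    (n : ℕ) (a : Fin n → S) :
    letI : Module (ResidueField R) (ResidueField S) :=
      (ResidueField.map (algebraMap R S)).toAlgebra.toModule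
    vecrank R (π ^ (ν - 1) • a) =
      vecrank (ResidueField R) (fun i => residue S (a i)) :=
  rank_smul_pow_eq_rank_residue_general R S π hπ ν hν hνnil hνmin hGal n a
end

section
/- Let R be a finite commutative chain ring, S a Galois extension of R of degree m with residue field F_{q^m} and natural projection Ψ : S → F_{q^m} extended coefficient-by-coefficient to S^n. Let C be a linear code of length n over S with Ψ(C) ≠ {0}. Then (i) d(C) ≤ d(Ψ(C)); and (ii) if C is a free S-module, then d(C) = d(Ψ(C)). -/
/-! Let `θ` generate the maximal ideal of `S` and let `π = θ ^ (e - 1)`, `e` being the nilpotency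
index of `θ`, so that `π * s = 0 ↔ s ∈ 𝔪_S` and `θ * s = 0 → π ∣ s`. Multiplication by `π` and the
residue map are then `R`-semilinear maps on `S` with the same kernel `𝔪_S`, hence
`rk_R (π • u) = rk_{k_R} (Ψ u)` for every `u`. For (i), a codeword `Ψ u` of minimal rank gives the
nonzero codeword `π • u` of the same rank. For (ii), a nonzero codeword `x` of minimal rank has a
nonzero multiple `θ ^ j • x` killed by `θ`; in a free module it is `π • z` with `z ∈ C`, and `Ψ z`
is a nonzero codeword of `Ψ(C)` of rank `rk_R (θ ^ j • x) ≤ rk_R x`. -/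

open IsLocalRing

open Submodule

section Subrank

variable {R R₂ R₃ M M₂ M₃ : Type*} [Semiring R] [Semiring R₂] [Semiring R₃]
  [AddCommGroup M] [AddCommGroup M₂] [AddCommGroup M₃] [Module R M] [Module R₂ M₂] [Module R₃ M₃]
  {σ₂ : R →+* R₂} {σ₃ : R →+* R₃}

theorem exists_span_range_eq_of_fg {N : Submodule R M} (hN : N.FG) :
    ∃ f : Fin (subrank N) → M, span R (Set.range f) = N :=
  Nat.sInf_mem (fg_iff_exists_fin_generating_family.mp hN)

theorem subrank_le_of_span_range_eq {N : Submodule R M} {k : ℕ} (f : Fin k → M)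
    (hf : span R (Set.range f) = N) : subrank N ≤ k :=
  Nat.sInf_le ⟨f, hf⟩

-- Generators of `F(N)` lift to `N`, and their images under `G` generate `G(N)` because `G`
-- factors through `F`.
theorem subrank_map_le_of_ker_le [RingHomSurjective σ₂] [RingHomSurjective σ₃]
    (F : M →ₛₗ[σ₂] M₂) (G : M →ₛₗ[σ₃] M₃) (hker : LinearMap.ker F ≤ LinearMap.ker G)
    {N : Submodule R M} (hN : (N.map F).FG) : subrank (N.map G) ≤ subrank (N.map F) := by
  obtain ⟨f, hf⟩ := exists_span_range_eq_of_fg hN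
  choose h hhN hhf using fun j => mem_map.mp (hf ▸ subset_span (Set.mem_range_self j))
  have hFh : (span R (Set.range h)).map F = N.map F := by
    rw [map_span, ← Set.range_comp, show F ∘ h = f from funext hhf, hf]
  refine subrank_le_of_span_range_eq (G ∘ h) ?_
  rw [Set.range_comp, ← map_span]
  refine le_antisymm (map_mono (span_le.mpr (Set.range_subset_iff.mpr hhN))) ?_
  rintro - ⟨x, hxN, rfl⟩
  obtain ⟨y, hy, hyx⟩ := mem_map.mp (hFh ▸ mem_map_of_mem hxN : F x ∈ _)
  have hxy : x - y ∈ LinearMap.ker G := hker (by simp [hyx])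
  rw [LinearMap.mem_ker, map_sub, sub_eq_zero] at hxy
  exact hxy ▸ mem_map_of_mem hy

theorem vecrank_comp [RingHomSurjective σ₂] (F : M →ₛₗ[σ₂] M₂) {n : ℕ} (u : Fin n → M) :
    vecrank R₂ (F ∘ u) = subrank ((span R (Set.range u)).map F) := by
  rw [vecrank, Set.range_comp, map_span]

theorem vecrank_comp_le_of_ker_le [RingHomSurjective σ₂] [RingHomSurjective σ₃]
    (F : M →ₛₗ[σ₂] M₂) (G : M →ₛₗ[σ₃] M₃) (hker : LinearMap.ker F ≤ LinearMap.ker G)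
    {n : ℕ} (u : Fin n → M) : vecrank R₃ (G ∘ u) ≤ vecrank R₂ (F ∘ u) := by
  rw [vecrank_comp, vecrank_comp]
  exact subrank_map_le_of_ker_le F G hker ((fg_span (Set.finite_range u)).map F)

theorem vecrank_comp_le [RingHomSurjective σ₂] (F : M →ₛₗ[σ₂] M₂) {n : ℕ} (u : Fin n → M) :
    vecrank R₂ (F ∘ u) ≤ vecrank R u :=
  vecrank_comp_le_of_ker_le LinearMap.id F (by simp) u

end Subrank

theorem exists_pow_smul_ne_zero_and_pow_succ_smul_eq_zero {S M : Type*} [Semiring S]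
    [AddCommMonoid M] [Module S M] {a : S} (ha : IsNilpotent a) {x : M} (hx : x ≠ 0) :
    ∃ j, a ^ j • x ≠ 0 ∧ a ^ (j + 1) • x = 0 := by
  classical
  have hex : ∃ k, a ^ k • x = 0 := ha.imp fun k hk => by rw [hk, zero_smul]
  have hpos : Nat.find hex ≠ 0 := fun h => hx (by simpa [h] using Nat.find_spec hex)
  refine ⟨Nat.find hex - 1, Nat.find_min hex (by omega), ?_⟩
  rw [Nat.sub_add_cancel (Nat.pos_of_ne_zero hpos)]
  exact Nat.find_spec hex

theorem exists_smul_eq_of_smul_eq_zero {S M : Type*} [CommRing S] [AddCommGroup M] [Module S M]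
    [Module.Free S M] {a b : S} (hab : ∀ s, a * s = 0 → b ∣ s) {x : M} (hx : a • x = 0) :
    ∃ z, b • z = x := by
  let e := Module.Free.chooseBasis S M
  have hcoord : ∀ i, a * e.repr x i = 0 := fun i => by
    simpa using DFunLike.congr_fun (congrArg e.repr hx) i
  choose t ht using fun i => hab _ (hcoord i)
  refine ⟨∑ i ∈ (e.repr x).support, t i • e i, ?_⟩
  rw [Finset.smul_sum]
  conv_rhs => rw [← e.linearCombination_repr x, Finsupp.linearCombination_apply, Finsupp.sum]
  exact Finset.sum_congr rfl fun i _ => by rw [smul_smul, ← ht]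

namespace IsLocalRing

variable {S : Type*} [CommRing S] [IsLocalRing S]

theorem mul_eq_zero_iff_mem_maximalIdeal_s7 {π : S} (hπ : π ≠ 0)
    (hπm : ∀ s ∈ maximalIdeal S, π * s = 0) (s : S) : π * s = 0 ↔ s ∈ maximalIdeal S := by
  refine ⟨fun hs => ?_, hπm s⟩
  by_contra hsm
  exact hπ ((notMem_maximalIdeal.mp hsm).mul_left_eq_zero.mp hs)

theorem pow_dvd_of_mul_eq_zero {θ : S} (hθ : maximalIdeal S = Ideal.span {θ}) {s : S}
    (hs : θ * s = 0) :
    ∀ {i : ℕ}, θ ^ i ≠ 0 → θ ^ i ∣ s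
  | 0, _ => by simp
  | i + 1, hi => by
    obtain ⟨a, rfl⟩ :=
      pow_dvd_of_mul_eq_zero hθ hs (i := i) fun h => hi (by rw [pow_succ, h, zero_mul])
    have ha : a ∈ maximalIdeal S := by
      by_contra ha
      exact hi (((notMem_maximalIdeal.mp ha).mul_left_eq_zero).mp (by rw [← hs]; ring))
    obtain ⟨c, rfl⟩ := Ideal.mem_span_singleton.mp (hθ ▸ ha)
    exact ⟨c, by ring⟩

theorem mul_pow_pred_nilpotencyClass_eq_zero_iff {θ : S} (hθ : maximalIdeal S = Ideal.span {θ})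
    (hnil : IsNilpotent θ) (s : S) :
    θ ^ (nilpotencyClass θ - 1) * s = 0 ↔ s ∈ maximalIdeal S := by
  refine mul_eq_zero_iff_mem_maximalIdeal_s7 (pow_pred_nilpotencyClass hnil) (fun s hs => ?_) s
  obtain ⟨c, rfl⟩ := Ideal.mem_span_singleton.mp (hθ ▸ hs)
  rw [← mul_assoc, ← pow_succ, Nat.sub_add_cancel (pos_nilpotencyClass_iff.mpr hnil),
    pow_nilpotencyClass hnil, zero_mul]

theorem pow_pred_nilpotencyClass_dvd_of_mul_eq_zero {θ : S}
    (hθ : maximalIdeal S = Ideal.span {θ}) (hnil : IsNilpotent θ) {s : S} (hs : θ * s = 0) :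
    θ ^ (nilpotencyClass θ - 1) ∣ s :=
  pow_dvd_of_mul_eq_zero hθ hs (pow_pred_nilpotencyClass hnil)

end IsLocalRing

theorem vecrank_smul_eq_vecrank_residue (R : Type*) {S : Type*} [CommRing R] [IsLocalRing R]
    [CommRing S] [IsLocalRing S] [Algebra R S] [IsLocalHom (algebraMap R S)] {π : S}
    (hπ : ∀ s, π * s = 0 ↔ s ∈ maximalIdeal S) {n : ℕ} (u : Fin n → S) :
    letI : Module (ResidueField R) (ResidueField S) :=
      (ResidueField.map (algebraMap R S)).toAlgebra.toModule
    vecrank R (π • u) = vecrank (ResidueField R) (fun i => residue S (u i)) := by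
  let := (ResidueField.map (algebraMap R S)).toAlgebra
  -- otherwise Mathlib's own `Module (ResidueField R) (ResidueField S)` instance is found first
  let : Module (ResidueField R) (ResidueField S) := Algebra.toModule
  have : RingHomSurjective (residue R) := ⟨residue_surjective⟩
  let Ψ : S →ₛₗ[residue R] ResidueField S :=
    { toFun := residue S
      map_add' := map_add _
      map_smul' := fun r s => by
        rw [Algebra.smul_def, map_mul]
        rfl }
  have hker : LinearMap.ker (LinearMap.mulLeft R π) = LinearMap.ker Ψ := by
    ext s
    simp [Ψ, hπ]
  exact le_antisymm (vecrank_comp_le_of_ker_le Ψ _ hker.ge u)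
    (vecrank_comp_le_of_ker_le _ Ψ hker.le u)

theorem smul_eq_zero_iff_residue_eq_zero {S : Type*} [CommRing S] [IsLocalRing S] {π : S}
    (hπ : ∀ s, π * s = 0 ↔ s ∈ maximalIdeal S) {n : ℕ} (u : Fin n → S) :
    π • u = 0 ↔ (fun i => residue S (u i)) = 0 := by
  simp [funext_iff, hπ]

theorem exists_residue_eq_of_mem_span {S : Type*} [CommRing S] [IsLocalRing S] {n : ℕ}
    {C : Submodule S (Fin n → S)} {w : Fin n → ResidueField S}
    (hw : w ∈ span (ResidueField S) ((fun (v : Fin n → S) i => residue S (v i)) '' C)) :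
    ∃ u ∈ C, (fun i => residue S (u i)) = w := by
  have : RingHomSurjective (residue S) := ⟨residue_surjective⟩
  let Ψ : (Fin n → S) →ₛₗ[residue S] (Fin n → ResidueField S) :=
    { toFun := fun v i => residue S (v i)
      map_add' := fun v w => funext fun i => map_add _ _ _
      map_smul' := fun s v => funext fun i => map_mul _ _ _ }
  rwa [show _ '' _ = ((C.map Ψ : Submodule _ _) : Set _) from rfl, span_eq] at hw

section MinRankDistance

variable {K S : Type*} [Semiring K] [Ring S] [Module K S] {n : ℕ} {C : Submodule S (Fin n → S)}

theorem minrkdist_le_vecrank {u : Fin n → S} (hu : u ∈ C) (hu0 : u ≠ 0) :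
    minrkdist K C ≤ vecrank K u :=
  Nat.sInf_le ⟨u, hu, 0, C.zero_mem, hu0, by rw [sub_zero]⟩

theorem exists_vecrank_eq_minrkdist (hC : C ≠ ⊥) :
    ∃ u ∈ C, u ≠ 0 ∧ vecrank K u = minrkdist K C := by
  obtain ⟨u, hu, hu0⟩ := (Submodule.ne_bot_iff C).mp hC
  obtain ⟨v, hv, w, hw, hvw, h⟩ :=
    Nat.sInf_mem (⟨_, u, hu, 0, C.zero_mem, hu0, rfl⟩ :
      {d | ∃ u ∈ C, ∃ v ∈ C, u ≠ v ∧ vecrank K (u - v) = d}.Nonempty)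
  exact ⟨v - w, sub_mem hv hw, sub_ne_zero.mpr hvw, h⟩

end MinRankDistance

theorem minDist_le_minDist_residue_and_eq_of_free_general
    (R S : Type*) [CommRing R] [IsLocalRing R]
    [CommRing S] [Finite S] [IsLocalRing S] [IsPrincipalIdealRing S]
    [Algebra R S] [IsLocalHom (algebraMap R S)]
    (n : ℕ) (C : Submodule S (Fin n → S))
    (Cres : Submodule (ResidueField S) (Fin n → ResidueField S))
    (hCres : Cres = Submodule.span (ResidueField S)
      ((fun (v : Fin n → S) (i : Fin n) => residue S (v i)) '' (C : Set (Fin n → S))))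
    (hne : Cres ≠ ⊥) :
    letI : Module (ResidueField R) (ResidueField S) :=
      (ResidueField.map (algebraMap R S)).toAlgebra.toModule
    (minrkdist R C ≤ minrkdist (ResidueField R) Cres ∧
      (Module.Free S ↥C → minrkdist R C = minrkdist (ResidueField R) Cres)) := by
  let : Module (ResidueField R) (ResidueField S) :=
    (ResidueField.map (algebraMap R S)).toAlgebra.toModule
  obtain ⟨θ, hθ⟩ := (IsPrincipalIdealRing.principal (maximalIdeal S)).principal
  have hnil : IsNilpotent θ :=
    Ring.KrullDimLE.isNilpotent_iff_mem_maximalIdeal.mpr (hθ ▸ mem_span_singleton_self θ)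
  set π := θ ^ (nilpotencyClass θ - 1)
  have hπ := mul_pow_pred_nilpotencyClass_eq_zero_iff hθ hnil
  obtain ⟨w, hwC, hw0, hw⟩ := exists_vecrank_eq_minrkdist (K := ResidueField R) hne
  obtain ⟨u, huC, rfl⟩ := exists_residue_eq_of_mem_span (hCres ▸ hwC)
  have hπu : π • u ≠ 0 := (smul_eq_zero_iff_residue_eq_zero hπ u).not.mpr hw0
  have hle : minrkdist R C ≤ minrkdist (ResidueField R) Cres := calc
    minrkdist R C ≤ vecrank R (π • u) := minrkdist_le_vecrank (C.smul_mem π huC) hπu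
    _ = vecrank (ResidueField R) (fun i => residue S (u i)) :=
      vecrank_smul_eq_vecrank_residue R hπ u
    _ = minrkdist (ResidueField R) Cres := hw
  refine ⟨hle, fun hfree => hle.antisymm ?_⟩
  obtain ⟨x, hxC, hx0, hx⟩ :=
    exists_vecrank_eq_minrkdist (K := R) <|
      (Submodule.ne_bot_iff C).mpr ⟨_, C.smul_mem π huC, hπu⟩
  obtain ⟨j, hj0, hj1⟩ := exists_pow_smul_ne_zero_and_pow_succ_smul_eq_zero hnil hx0
  obtain ⟨z, hz⟩ := exists_smul_eq_of_smul_eq_zero (M := C)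
    (fun _ => pow_pred_nilpotencyClass_dvd_of_mul_eq_zero hθ hnil)
    (x := ⟨θ ^ j • x, C.smul_mem _ hxC⟩) (Subtype.ext (by simpa [smul_smul, pow_succ'] using hj1))
  have hz' : π • (z : Fin n → S) = θ ^ j • x := congrArg Subtype.val hz
  calc minrkdist (ResidueField R) Cres
      ≤ vecrank (ResidueField R) (fun i => residue S (z.1 i)) :=
        minrkdist_le_vecrank (hCres ▸ subset_span ⟨z, z.2, rfl⟩)
          ((smul_eq_zero_iff_residue_eq_zero hπ z.1).not.mp (hz' ▸ hj0))
    _ = vecrank R (θ ^ j • x) := hz' ▸ (vecrank_smul_eq_vecrank_residue R hπ z.1).symm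
    _ ≤ vecrank R x := vecrank_comp_le (LinearMap.mulLeft R (θ ^ j)) x
    _ = minrkdist R C := hx

/-- Let `R` be a finite commutative chain ring, `S` a Galois extension of
`R` of degree `m` with residue field `F_{q^m}` and natural projection `Ψ : S → F_{q^m}`
extended coefficient-by-coefficient to `S^n`.  Let `C` be a linear code of length `n` over
`S` with `Ψ(C) ≠ {0}`.  Then (i) `d(C) ≤ d(Ψ(C))`, and (ii) if `C` is a free `S`-module
then `d(C) = d(Ψ(C))`. -/
theorem minDist_le_minDist_residue_and_eq_of_free
    (R S : Type*) [CommRing R] [Finite R] [IsLocalRing R] [IsPrincipalIdealRing R]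
    [CommRing S] [Finite S] [IsLocalRing S] [IsPrincipalIdealRing S]
    [Algebra R S] [IsLocalHom (algebraMap R S)] [Module.Free R S]
    (m : ℕ) (hm : Module.finrank R S = m)
    (hGal : maximalIdeal S = Ideal.map (algebraMap R S) (maximalIdeal R))
    (n : ℕ) (C : Submodule S (Fin n → S))
    (Cres : Submodule (ResidueField S) (Fin n → ResidueField S))
    (hCres : Cres = Submodule.span (ResidueField S)
      ((fun (v : Fin n → S) (i : Fin n) => residue S (v i)) '' (C : Set (Fin n → S))))
    (hne : Cres ≠ ⊥) :
    letI : Module (ResidueField R) (ResidueField S) :=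
      (ResidueField.map (algebraMap R S)).toAlgebra.toModule
    (minrkdist R C ≤ minrkdist (ResidueField R) Cres ∧
      (Module.Free S ↥C → minrkdist R C = minrkdist (ResidueField R) Cres)) :=
  minDist_le_minDist_residue_and_eq_of_free_general R S n C Cres hCres hne
end

section
/- Let R ≅ R_(1) × ⋯ × R_(ρ) be a finite commutative principal ideal ring decomposed into finite chain rings, S = S_(1) × ⋯ × S_(ρ) a Galois extension of R of degree m with coordinate projections Φ_(j) extended coefficient-by-coefficient. Let C be an S-submodule of S^n, y ∈ S^n, and t a positive integer. Then there exist e ∈ S^n and c ∈ C with y = c + e and rk_R(e) ≤ t if and only if for every j ∈ {1,…,ρ} there exist e_(j) ∈ S_(j)^n and c_(j) ∈ Φ_(j)(C) with Φ_(j)(y) = c_(j) + e_(j) and rk_{R_(j)}(e_(j)) ≤ t. -/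
/-!
Over a finite product of rings `∏ Rⱼ`, the idempotents `Pi.single j 1` split every span in
`∏ Mⱼ` into the product of the spans of its projections. For the coordinates of an error
vector this says that `e` is generated over `R` by `t` elements iff every `Φⱼ(e)` is generated
over `Rⱼ` by `t` elements (shorter generating families are padded by zeros). For a code, through
`Sⁿ ≅ ∏ⱼ Sⱼⁿ`, it says that `c ∈ C` iff `Φⱼ(c) ∈ Φⱼ(C)` for every `j`, so the local
decompositions `Φⱼ(y) = cⱼ + eⱼ` glue to a global one.
-/

open IsLocalRing

open Submodule Function

section PiSpan

variable {ι : Type*} {R M : ι → Type*} [∀ j, Semiring (R j)] [∀ j, AddCommMonoid (M j)]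
  [∀ j, Module (R j) (M j)] {X Y : Set (∀ j, M j)}

theorem Submodule.apply_mem_span_image_of_mem_span_pi {v : ∀ j, M j}
    (hv : v ∈ span (∀ j, R j) X) (j : ι) : v j ∈ span (R j) (eval j '' X) := by
  induction hv using span_induction with
  | mem x hx => exact subset_span ⟨x, hx, rfl⟩
  | zero => exact zero_mem _
  | add x y _ _ hx hy => exact add_mem hx hy
  | smul r x _ hx => exact smul_mem _ (r j) hx

theorem Submodule.single_mem_span_pi [DecidableEq ι] {j : ι} {w : M j}
    (hw : w ∈ span (R j) (eval j '' X)) : Pi.single j w ∈ span (∀ j, R j) X := by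
  induction hw using span_induction with
  | mem w hw =>
    obtain ⟨x, hx, rfl⟩ := hw
    have hsingle : Pi.single j (x j) = (Pi.single j 1 : ∀ j, R j) • x := by
      funext k
      rcases eq_or_ne k j with rfl | hk <;> simp [*]
    exact hsingle ▸ smul_mem _ _ (subset_span hx)
  | zero => simp
  | add w w' _ _ hw hw' => exact Pi.single_add j w w' ▸ add_mem hw hw'
  | smul r w _ hw => exact (Pi.single_smul₀ j r w).symm ▸ smul_mem _ _ hw

theorem Submodule.mem_span_pi_iff [Finite ι] {v : ∀ j, M j} :
    v ∈ span (∀ j, R j) X ↔ ∀ j, v j ∈ span (R j) (eval j '' X) := by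
  classical
  have := Fintype.ofFinite ι
  refine ⟨apply_mem_span_image_of_mem_span_pi, fun hv => ?_⟩
  rw [← Finset.univ_sum_single v]
  exact sum_mem fun j _ => single_mem_span_pi (hv j)

theorem Submodule.span_image_eval_le_of_span_pi_le
    (h : span (∀ j, R j) X ≤ span (∀ j, R j) Y) (j : ι) :
    span (R j) (eval j '' X) ≤ span (R j) (eval j '' Y) := by
  rw [span_le]
  rintro _ ⟨x, hx, rfl⟩
  exact apply_mem_span_image_of_mem_span_pi (h (subset_span hx)) j

theorem Submodule.span_pi_eq_span_pi_iff [Finite ι] :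
    span (∀ j, R j) X = span (∀ j, R j) Y ↔
      ∀ j, span (R j) (eval j '' X) = span (R j) (eval j '' Y) := by
  refine ⟨fun h j => ?_, fun h => ?_⟩
  · exact le_antisymm (span_image_eval_le_of_span_pi_le h.le j)
      (span_image_eval_le_of_span_pi_le h.ge j)
  · ext v
    simp only [mem_span_pi_iff, h]

end PiSpan

section Codes

variable {ι α : Type*} {S : ι → Type*} [∀ j, Semiring (S j)]

def LinearEquiv.piCommPi : (α → ∀ j, S j) ≃ₗ[∀ j, S j] ∀ j, α → S j :=
  { Equiv.piComm _ with map_add' := fun _ _ => rfl, map_smul' := fun _ _ => rfl }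

theorem Submodule.mem_iff_forall_mem_span_image_proj [Finite ι]
    (C : Submodule (∀ j, S j) (α → ∀ j, S j)) {c : α → ∀ j, S j} :
    c ∈ C ↔ ∀ j, (fun i => c i j) ∈ span (S j) ((fun (v : α → ∀ j, S j) i => v i j) '' C) := by
  let φ := LinearEquiv.piCommPi (α := α) (S := S)
  have hspan : span (∀ j, S j) (φ '' C) = C.map φ.toLinearMap := by
    rw [← span_eq (C.map φ.toLinearMap), map_coe]; rfl
  have hc : c ∈ C ↔ φ c ∈ span (∀ j, S j) (φ '' C) := by
    rw [hspan, mem_map_equiv, LinearEquiv.symm_apply_apply]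
  simp only [hc, mem_span_pi_iff, Set.image_image]
  rfl

end Codes

section Rank

variable {R M : Type*} [Semiring R] [AddCommMonoid M] [Module R M]

theorem exists_fin_span_range_eq_of_le {k t : ℕ} (hkt : k ≤ t) (f : Fin k → M) :
    ∃ g : Fin t → M, span R (Set.range g) = span R (Set.range f) := by
  refine ⟨fun i => if h : (i : ℕ) < k then f ⟨i, h⟩ else 0, le_antisymm ?_ ?_⟩
  · rw [← span_insert_zero (s := Set.range f)]
    refine span_mono ?_
    rintro _ ⟨i, rfl⟩
    by_cases h : (i : ℕ) < k
    · simp only [dif_pos h]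
      exact Or.inr ⟨_, rfl⟩
    · simp only [dif_neg h]
      exact Or.inl rfl
  · refine span_mono ?_
    rintro _ ⟨i, rfl⟩
    exact ⟨⟨i, i.2.trans_le hkt⟩, by simp⟩

theorem vecrank_le_iff {n : ℕ} (u : Fin n → M) (t : ℕ) :
    vecrank R u ≤ t ↔ ∃ f : Fin t → M, span R (Set.range f) = span R (Set.range u) := by
  refine ⟨fun h => ?_, fun ⟨f, hf⟩ => Nat.sInf_le ⟨f, hf⟩⟩
  obtain ⟨f, hf⟩ := Nat.sInf_mem (⟨n, u, rfl⟩ : {k | ∃ f : Fin k → M,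
    span R (Set.range f) = span R (Set.range u)}.Nonempty)
  obtain ⟨g, hg⟩ := exists_fin_span_range_eq_of_le (R := R) h f
  exact ⟨g, hg.trans hf⟩

end Rank

theorem vecrank_pi_le_iff {ι : Type*} [Finite ι] {R M : ι → Type*} [∀ j, Semiring (R j)]
    [∀ j, AddCommMonoid (M j)] [∀ j, Module (R j) (M j)] {n : ℕ} (u : Fin n → ∀ j, M j)
    (t : ℕ) : vecrank (∀ j, R j) u ≤ t ↔ ∀ j, vecrank (R j) (fun i => u i j) ≤ t := by
  have hrange : ∀ {k} (f : Fin k → ∀ j, M j) j,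
      Set.range (fun i => f i j) = eval j '' Set.range f := fun f j => by
    rw [← Set.range_comp]; rfl
  simp only [vecrank_le_iff, hrange]
  constructor
  · rintro ⟨f, hf⟩ j
    exact ⟨fun i => f i j, by rw [hrange]; exact span_pi_eq_span_pi_iff.mp hf j⟩
  · intro h
    choose f hf using h
    refine ⟨fun i j => f j i, span_pi_eq_span_pi_iff.mpr fun j => ?_⟩
    rw [← hf, ← hrange]

theorem rankDecoding_iff_rankDecoding_of_projections_general
    (ι : Type*) [Fintype ι] (Rc Sc : ι → Type*)
    [∀ j, CommRing (Rc j)] [∀ j, CommRing (Sc j)] [∀ j, Algebra (Rc j) (Sc j)]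
    (n : ℕ) (C : Submodule (∀ j, Sc j) (Fin n → ∀ j, Sc j))
    (y : Fin n → ∀ j, Sc j) (t : ℕ) :
    (∃ e : Fin n → ∀ j, Sc j, ∃ c ∈ C, y = c + e ∧ vecrank (∀ j, Rc j) e ≤ t) ↔
    (∀ j, ∃ e : Fin n → Sc j,
      ∃ c ∈ Submodule.span (Sc j)
        ((fun (v : Fin n → ∀ j, Sc j) (i : Fin n) => v i j) ''
          (C : Set (Fin n → ∀ j, Sc j))),
      (fun i => y i j) = c + e ∧ vecrank (Rc j) e ≤ t) := by
  constructor
  · rintro ⟨e, c, hc, rfl, he⟩ j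
    exact ⟨fun i => e i j, fun i => c i j, (mem_iff_forall_mem_span_image_proj C).mp hc j, rfl,
      (vecrank_pi_le_iff e t).mp he j⟩
  · intro h
    choose e c hc hy he using h
    let c' : Fin n → ∀ j, Sc j := fun i j => c j i
    have he' : ∀ j, (fun i => (y - c') i j) = e j := fun j => by
      funext i
      simp [c', congrFun (hy j) i]
    refine ⟨y - c', c', (mem_iff_forall_mem_span_image_proj C).mpr hc, (add_sub_cancel _ _).symm,
      (vecrank_pi_le_iff _ t).mpr fun j => he' j ▸ he j⟩

/-- Let `R ≅ R₁ × ⋯ × R_ρ` be a finite commutative principal ideal ring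
decomposed into finite chain rings, `S = S₁ × ⋯ × S_ρ` a Galois extension of `R` of degree
`m` with coordinate projections `Φⱼ` extended coefficient-by-coefficient.  Let `C` be an
`S`-submodule of `S^n`, `y ∈ S^n` and `t` a positive integer.  Then there exist `e ∈ S^n`
and `c ∈ C` with `y = c + e` and `rk_R(e) ≤ t` if and only if for every `j` there exist
`eⱼ ∈ Sⱼ^n` and `cⱼ ∈ Φⱼ(C)` with `Φⱼ(y) = cⱼ + eⱼ` and `rk_{Rⱼ}(eⱼ) ≤ t`. -/
theorem rankDecoding_iff_rankDecoding_of_projections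
    (ι : Type*) [Fintype ι] [Nonempty ι] (Rc Sc : ι → Type*)
    [∀ j, CommRing (Rc j)] [∀ j, Finite (Rc j)] [∀ j, IsLocalRing (Rc j)]
    [∀ j, IsPrincipalIdealRing (Rc j)]
    [∀ j, CommRing (Sc j)] [∀ j, Finite (Sc j)] [∀ j, IsLocalRing (Sc j)]
    [∀ j, IsPrincipalIdealRing (Sc j)]
    [∀ j, Algebra (Rc j) (Sc j)] [∀ j, Module.Free (Rc j) (Sc j)]
    (m : ℕ) (hm : ∀ j, Module.finrank (Rc j) (Sc j) = m)
    (hGal : ∀ j, maximalIdeal (Sc j) =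
      Ideal.map (algebraMap (Rc j) (Sc j)) (maximalIdeal (Rc j)))
    (n : ℕ) (C : Submodule (∀ j, Sc j) (Fin n → ∀ j, Sc j))
    (y : Fin n → ∀ j, Sc j) (t : ℕ) (ht : 0 < t) :
    (∃ e : Fin n → ∀ j, Sc j, ∃ c ∈ C, y = c + e ∧ vecrank (∀ j, Rc j) e ≤ t) ↔
    (∀ j, ∃ e : Fin n → Sc j,
      ∃ c ∈ Submodule.span (Sc j)
        ((fun (v : Fin n → ∀ j, Sc j) (i : Fin n) => v i j) ''
          (C : Set (Fin n → ∀ j, Sc j))),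
      (fun i => y i j) = c + e ∧ vecrank (Rc j) e ≤ t) :=
  rankDecoding_iff_rankDecoding_of_projections_general ι Rc Sc n C y t
end

section
/- Let R be a finite commutative chain ring, V a free R-module of rank a, and W a submodule of V of rank b. For any integer u with b ≤ u ≤ a, there exists a free R-submodule F of V of rank u such that W ⊆ F. -/
open IsLocalRing

open Module Submodule Set

/-! In a local Bézout ring any two elements are comparable under divisibility, so every vector `w`
of a free module of finite rank is `c • r` with `φ r = 1` for some linear form `φ`: divide `w` by
the coordinate that divides all the others. Then `V = R ∙ r ⊕ ker φ` with `ker φ` free of rank one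
less, and peeling off the generators of `W` one at a time yields a linearly independent family of
any length `u` between `subrank W` and `rank V` whose span contains `W`. A free module of rank `u`
cannot be generated by fewer than `u` elements, so that span has `subrank` exactly `u`. -/

/- Mathlib's `ValuationRing` instance for local Bézout rings assumes a domain; finite chain rings
have zero divisors. -/
theorem IsLocalRing.preValuationRing_of_isBezout (R : Type*) [CommRing R] [IsLocalRing R]
    [IsBezout R] : PreValuationRing R := by
  refine PreValuationRing.iff_dvd_total.mpr ⟨fun a b => ?_⟩
  obtain ⟨g, hg : _ = Ideal.span _⟩ := IsBezout.span_pair_isPrincipal a b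
  obtain ⟨α, rfl⟩ := Ideal.mem_span_singleton'.mp
    (show a ∈ Ideal.span {g} by rw [← hg]; exact Ideal.subset_span (by simp))
  obtain ⟨β, rfl⟩ := Ideal.mem_span_singleton'.mp
    (show b ∈ Ideal.span {g} by rw [← hg]; exact Ideal.subset_span (by simp))
  obtain ⟨x, y, hxy⟩ := Ideal.mem_span_pair.mp
    (show g ∈ Ideal.span {α * g, β * g} by rw [hg]; exact Ideal.subset_span (by simp))
  rcases IsLocalRing.isUnit_or_isUnit_one_sub_self (x * α + y * β) with h | h
  · rcases IsLocalRing.isUnit_or_isUnit_of_isUnit_add h with h' | h' <;> [left; right]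
    all_goals exact mul_dvd_mul_right (isUnit_iff_forall_dvd.mp (isUnit_of_mul_isUnit_right h') _) _
  · have hg0 : g = 0 := by
      simpa using h.mul_left_eq_zero.mp (by linear_combination -hxy : g * (1 - (x * α + y * β)) = 0)
    simp [hg0]

theorem PreValuationRing.exists_forall_dvd {R : Type*} [CommRing R] [Nontrivial R]
    [PreValuationRing R] {ι : Type*} [Finite ι] [Nonempty ι] (x : ι → R) :
    ∃ j, ∀ i, x j ∣ x i := by
  classical
  obtain ⟨j, hj⟩ := Finite.exists_max fun i => Ideal.span {x i}
  exact ⟨j, fun i => Ideal.span_singleton_le_span_singleton.mp (hj i)⟩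

theorem exists_eq_smul_and_dual_apply_eq_one {R V : Type*} [CommRing R] [IsLocalRing R]
    [IsBezout R] [AddCommGroup V] [Module R V] [Free R V] [Module.Finite R V] [Nontrivial V]
    (w : V) :
    ∃ (c : R) (r : V) (φ : Dual R V), w = c • r ∧ φ r = 1 := by
  classical
  have := IsLocalRing.preValuationRing_of_isBezout R
  let B := Free.chooseBasis R V
  have := B.index_nonempty
  obtain ⟨j, hj⟩ := PreValuationRing.exists_forall_dvd (B.repr w)
  choose d hd using hj
  refine ⟨B.repr w j, B.equivFun.symm (Function.update d j 1), B.coord j, ?_, ?_⟩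
  · refine B.equivFun.injective (funext fun i => ?_)
    rw [map_smul, LinearEquiv.apply_symm_apply, Basis.equivFun_apply, Pi.smul_apply, smul_eq_mul]
    rcases eq_or_ne i j with rfl | hij
    · rw [Function.update_self, mul_one]
    · rw [Function.update_of_ne hij, hd]
  · rw [Basis.coord_apply, ← Basis.equivFun_apply, LinearEquiv.apply_symm_apply,
      Function.update_self]

namespace Module.Dual

variable {R V : Type*} [CommRing R] [AddCommGroup V] [Module R V] {φ : Dual R V} {r : V}

def kerProjection (hr : φ r = 1) : V →ₗ[R] LinearMap.ker φ :=
  (LinearMap.id - φ.smulRight r).codRestrict (LinearMap.ker φ) fun x => by simp [hr]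

theorem kerProjection_apply (hr : φ r = 1) (x : V) : (kerProjection hr x : V) = x - φ x • r :=
  rfl

theorem kerProjection_comp_subtype (hr : φ r = 1) :
    kerProjection hr ∘ₗ (LinearMap.ker φ).subtype = LinearMap.id := by
  ext ⟨x, hx⟩
  simp [kerProjection_apply, LinearMap.mem_ker.mp hx]

def kerProdEquiv (hr : φ r = 1) : V ≃ₗ[R] LinearMap.ker φ × R :=
  LinearEquiv.ofLinearMap ((kerProjection hr).prod φ)
    ((LinearMap.ker φ).subtype.coprod (LinearMap.toSpanSingleton R V r))
    (by ext x <;> simp [kerProjection_apply, hr])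
    (by ext x; simp [kerProjection_apply])

theorem finite_ker [Module.Finite R V] (hr : φ r = 1) : Module.Finite R (LinearMap.ker φ) :=
  .of_surjective _ (LinearMap.surjective_of_comp_eq_id _ _ (kerProjection_comp_subtype hr))

theorem free_ker [IsLocalRing R] [Free R V] [Module.Finite R V] (hr : φ r = 1) :
    Free R (LinearMap.ker φ) :=
  have : Module.Projective R (LinearMap.ker φ) := .of_split _ _ (kerProjection_comp_subtype hr)
  have := finite_ker hr
  free_of_flat_of_isLocalRing

theorem finrank_ker_add_one [IsLocalRing R] [Free R V] [Module.Finite R V] (hr : φ r = 1) :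
    finrank R (LinearMap.ker φ) + 1 = finrank R V := by
  have := finite_ker hr
  have := free_ker hr
  simp [(kerProdEquiv hr).finrank_eq]

end Module.Dual

theorem exists_linearIndependent_span_le {R V : Type*} [CommRing R] [IsLocalRing R] [IsBezout R]
    [AddCommGroup V] [Module R V] [Free R V] [Module.Finite R V] {b u : ℕ} (f : Fin b → V)
    (hbu : b ≤ u) (hu : u ≤ finrank R V) :
    ∃ g : Fin u → V, LinearIndependent R g ∧ span R (range f) ≤ span R (range g) := by
  induction b generalizing V u with
  | zero =>
    refine ⟨finBasis R V ∘ Fin.castLE hu,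
      (finBasis R V).linearIndependent.comp _ (Fin.castLE_injective hu), ?_⟩
    simp [range_eq_empty]
  | succ b ih =>
    obtain ⟨u, rfl⟩ : ∃ u', u = u' + 1 := ⟨u - 1, by omega⟩
    have : Nontrivial V := nontrivial_of_finrank_pos (R := R) (by omega)
    obtain ⟨c, r, φ, hc, hr⟩ := exists_eq_smul_and_dual_apply_eq_one (R := R) (f 0)
    -- split off `R ∙ r ∋ f 0` and recurse in `ker φ` on the projections of the other generators
    have := Dual.finite_ker hr
    have := Dual.free_ker hr
    have hker := Dual.finrank_ker_add_one hr
    obtain ⟨g, hg, hfg⟩ :=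
      ih (u := u) (fun i => Dual.kerProjection hr (f i.succ)) (by omega) (by omega)
    have hg_ker : span R (range ((LinearMap.ker φ).subtype ∘ g)) ≤ LinearMap.ker φ := by
      rw [range_comp, ← map_span]
      exact map_subtype_le _ _
    refine ⟨Fin.cons r ((LinearMap.ker φ).subtype ∘ g), ?_, ?_⟩
    · refine .finCons' r _ (hg.map' _ (ker_subtype _)) fun a y hy hay => ?_
      simpa [hr, LinearMap.mem_ker.mp (hg_ker hy)] using congr_arg φ hay
    · rw [Fin.range_cons, span_insert, span_le]
      rintro _ ⟨i, rfl⟩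
      induction i using Fin.cases with
      | zero => exact mem_sup_left (hc ▸ smul_mem _ _ (mem_span_singleton_self r))
      | succ i =>
        have hfi : f i.succ = φ (f i.succ) • r + Dual.kerProjection hr (f i.succ) := by
          rw [Dual.kerProjection_apply, add_sub_cancel]
        rw [hfi, range_comp, ← map_span]
        exact add_mem (mem_sup_left (smul_mem _ _ (mem_span_singleton_self r)))
          (mem_sup_right (mem_map_of_mem (hfg (subset_span ⟨i, rfl⟩))))

theorem exists_fin_span_eq_of_fg {R M : Type*} [Semiring R] [AddCommMonoid M] [Module R M]
    {N : Submodule R M} (hN : N.FG) : ∃ f : Fin (subrank N) → M, span R (range f) = N :=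
  Nat.sInf_mem (fg_iff_exists_fin_generating_family.mp hN)

theorem subrank_span_eq_of_linearIndependent {R M : Type*} [CommRing R] [Nontrivial R]
    [AddCommGroup M] [Module R M] {u : ℕ} {g : Fin u → M} (hg : LinearIndependent R g) :
    subrank (span R (range g)) = u := by
  refine le_antisymm (Nat.sInf_le ⟨g, rfl⟩) (le_csInf ⟨u, g, rfl⟩ ?_)
  rintro k ⟨f, hf⟩
  have := finrank_range_le_card (R := R) f
  rwa [Set.finrank, hf, finrank_span_eq_card hg, Fintype.card_fin, Fintype.card_fin] at this

theorem exists_free_submodule_of_rank_containing_general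
    (R : Type*) [CommRing R] [IsLocalRing R] [IsPrincipalIdealRing R]
    (V : Type*) [AddCommGroup V] [Module R V]
    (a : ℕ) (hV : Nonempty (V ≃ₗ[R] (Fin a → R)))
    (W : Submodule R V) (b : ℕ) (hW : subrank W = b)
    (u : ℕ) (hbu : b ≤ u) (hua : u ≤ a) :
    ∃ F : Submodule R V, W ≤ F ∧ Module.Free R ↥F ∧ subrank F = u := by
  obtain ⟨e⟩ := hV
  have : Free R V := .of_equiv e.symm
  have : Module.Finite R V := .equiv e.symm
  obtain ⟨f, hf⟩ := exists_fin_span_eq_of_fg (IsNoetherian.noetherian W)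
  subst hW
  obtain ⟨g, hg, hWg⟩ :=
    exists_linearIndependent_span_le (R := R) f hbu (by simpa [e.finrank_eq] using hua)
  exact ⟨span R (range g), hf ▸ hWg, .of_basis (.span hg), subrank_span_eq_of_linearIndependent hg⟩

/-- Let `R` be a finite commutative chain ring, `V` a free `R`-module of
rank `a`, and `W` a submodule of `V` of rank `b`.  For any integer `u` with `b ≤ u ≤ a`,
there exists a free `R`-submodule `F` of `V` of rank `u` such that `W ⊆ F`. -/
theorem exists_free_submodule_of_rank_containing
    (R : Type*) [CommRing R] [Finite R] [IsLocalRing R] [IsPrincipalIdealRing R]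
    (V : Type*) [AddCommGroup V] [Module R V]
    (a : ℕ) (hV : Nonempty (V ≃ₗ[R] (Fin a → R)))
    (W : Submodule R V) (b : ℕ) (hW : subrank W = b)
    (u : ℕ) (hbu : b ≤ u) (hua : u ≤ a) :
    ∃ F : Submodule R V, W ≤ F ∧ Module.Free R ↥F ∧ subrank F = u :=
  exists_free_submodule_of_rank_containing_general R V a hV W b hW u hbu hua
end
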